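/- (Maximum principle) Fix $k \in \mathbb{Z}$, let $\Omega_k = \{\overline{T}(f\sigma) > 2^k\}$, and let $Q$ be a Whitney cube for $\Omega_k$ with $Q^{(2)} \cap \Omega_k^c \neq \emptyset$. Then for all $x \in Q$: $\overline{T}(\mathbf{1}_{(Q^{(2)})^c} f \sigma)(x) \leq 2^k$, where $\overline{T}(g)(x) = (\sum_{R \in \mathcal{Q}} |\tau_R \mathbb{E}_R(g)\mathbf{1}_R(x)|^q)^{1/q}$. -/

import Mathlib

open MeasureTheory Set

/-- The half-open dyadic cube of generation `k` (side length `2^(-k)`) at position `m`. -/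
def dyadicCube (d : ℕ) (k : ℤ) (m : Fin d → ℤ) : Set (Fin d → ℝ) :=
  {x | ∀ i, (m i : ℝ) * 2 ^ (-k) ≤ x i ∧ x i < ((m i : ℝ) + 1) * 2 ^ (-k)}

/-- Index of the dyadic parent of the dyadic cube indexed by `(k, m)`. -/
def dyadicParentIdx (d : ℕ) : ℤ × (Fin d → ℤ) → ℤ × (Fin d → ℤ) :=
  fun p => (p.1 - 1, fun i => Int.fdiv (p.2 i) 2)

/-- The dyadic cube corresponding to an index pair. -/
def cubeOf (d : ℕ) (p : ℤ × (Fin d → ℤ)) : Set (Fin d → ℝ) := dyadicCube d p.1 p.2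

/-- The dyadic parent of the cube indexed by `p`. -/
def parentCubeOf (d : ℕ) (p : ℤ × (Fin d → ℤ)) : Set (Fin d → ℝ) :=
  cubeOf d (dyadicParentIdx d p)

/-- The dyadic grandparent of the cube indexed by `p`. -/
def grandparentCubeOf (d : ℕ) (p : ℤ × (Fin d → ℤ)) : Set (Fin d → ℝ) :=
  cubeOf d (dyadicParentIdx d (dyadicParentIdx d p))

/-- The dyadic sublinear operator `T̄ h (x) = (∑_R (τ_R 𝔼_R(h) 1_R(x))^q)^{1/q}`. -/
noncomputable def Tbar (d : ℕ) (q : ℝ) (R : ℕ → ℤ × (Fin d → ℤ)) (τ : ℕ → ENNReal)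
    (h : (Fin d → ℝ) → ENNReal) (x : Fin d → ℝ) : ENNReal :=
  (∑' n, (τ n * ((MeasureTheory.volume (cubeOf d (R n)))⁻¹ *
      ∫⁻ y in cubeOf d (R n), h y) *
      (cubeOf d (R n)).indicator (fun _ => (1 : ENNReal)) x) ^ q) ^ (1 / q)

/-!
Dyadic cubes containing a common point are nested. So a dyadic cube `R` containing `x ∈ Q`
either lies inside `Q^{(2)}`, where `1_{(Q^{(2)})ᶜ} fσ` vanishes, or contains `Q^{(2)}` and hence
every `z ∈ Q^{(2)}`. Either way each summand of `T̄(1_{(Q^{(2)})ᶜ} fσ)(x)` is dominated by the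
corresponding summand of `T̄(fσ)(z)`.
-/

section DyadicCube

variable {d : ℕ}

lemma mem_dyadicCube_iff {k : ℤ} {m : Fin d → ℤ} {x : Fin d → ℝ} :
    x ∈ dyadicCube d k m ↔ ∀ i, ⌊x i * 2 ^ k⌋ = m i := by
  have h2k : (0 : ℝ) < 2 ^ k := zpow_pos two_pos k
  simp only [dyadicCube, mem_ofPred_eq, Int.floor_eq_iff, zpow_neg, ← div_eq_mul_inv,
    div_le_iff₀ h2k, lt_div_iff₀ h2k]

lemma mem_cubeOf_iff {p : ℤ × (Fin d → ℤ)} {x : Fin d → ℝ} :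
    x ∈ cubeOf d p ↔ ∀ i, ⌊x i * 2 ^ p.1⌋ = p.2 i :=
  mem_dyadicCube_iff

lemma measurableSet_cubeOf (p : ℤ × (Fin d → ℤ)) : MeasurableSet (cubeOf d p) := by
  have : cubeOf d p = ⋂ i, (fun x : Fin d → ℝ => ⌊x i * 2 ^ p.1⌋) ⁻¹' {p.2 i} := by
    ext x
    simp only [mem_cubeOf_iff, mem_iInter, mem_preimage, mem_singleton_iff]
  rw [this]
  exact .iInter fun i =>
    (Int.measurable_floor.comp ((measurable_pi_apply i).mul_const _)) (measurableSet_singleton _)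

lemma floor_mul_two_zpow_sub_one (r : ℝ) (k : ℤ) : ⌊r * 2 ^ (k - 1)⌋ = ⌊r * 2 ^ k⌋ / 2 := by
  rw [zpow_sub_one₀ two_ne_zero, ← mul_assoc, ← div_eq_mul_inv]
  exact_mod_cast Int.floor_div_natCast (r * 2 ^ k) 2

lemma floor_mul_two_zpow_eq_of_le {r s : ℝ} {j k : ℤ} (hjk : j ≤ k)
    (h : ⌊r * 2 ^ k⌋ = ⌊s * 2 ^ k⌋) : ⌊r * 2 ^ j⌋ = ⌊s * 2 ^ j⌋ := by
  induction j, hjk using Int.leInductionDown with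
  | base => exact h
  | pred j _ ih => rw [floor_mul_two_zpow_sub_one, floor_mul_two_zpow_sub_one, ih]

lemma cubeOf_subset_parentCubeOf (p : ℤ × (Fin d → ℤ)) : cubeOf d p ⊆ parentCubeOf d p := by
  intro x hx
  rw [parentCubeOf, mem_cubeOf_iff]
  intro i
  rw [dyadicParentIdx, floor_mul_two_zpow_sub_one, mem_cubeOf_iff.mp hx i]
  exact (Int.fdiv_eq_ediv_of_nonneg _ zero_le_two).symm

lemma cubeOf_subset_of_mem {p p' : ℤ × (Fin d → ℤ)} {x : Fin d → ℝ} (hle : p'.1 ≤ p.1)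
    (hx : x ∈ cubeOf d p) (hx' : x ∈ cubeOf d p') : cubeOf d p ⊆ cubeOf d p' := by
  intro y hy
  rw [mem_cubeOf_iff] at hx hx' hy ⊢
  intro i
  rw [← hx' i]
  exact floor_mul_two_zpow_eq_of_le hle ((hy i).trans (hx i).symm)

lemma cubeOf_subset_or_subset_of_mem {p p' : ℤ × (Fin d → ℤ)} {x : Fin d → ℝ}
    (hx : x ∈ cubeOf d p) (hx' : x ∈ cubeOf d p') :
    cubeOf d p ⊆ cubeOf d p' ∨ cubeOf d p' ⊆ cubeOf d p :=
  (le_total p'.1 p.1).imp (cubeOf_subset_of_mem · hx hx') (cubeOf_subset_of_mem · hx' hx)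

end DyadicCube

section TbarSummand

variable {d : ℕ} (R : ℕ → ℤ × (Fin d → ℤ)) (τ : ℕ → ENNReal)

/-- `Tbar d q R τ h x` is by definition `(∑' n, TbarSummand R τ h x n ^ q) ^ (1 / q)`. -/
noncomputable def TbarSummand (h : (Fin d → ℝ) → ENNReal) (x : Fin d → ℝ) (n : ℕ) : ENNReal :=
  τ n * ((volume (cubeOf d (R n)))⁻¹ * ∫⁻ y in cubeOf d (R n), h y) *
    (cubeOf d (R n)).indicator (fun _ => (1 : ENNReal)) x

variable {R τ}

lemma Tbar_le_Tbar_of_summand_le {q : ℝ} (hq : 0 ≤ q) {h h' : (Fin d → ℝ) → ENNReal}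
    {x z : Fin d → ℝ} (hle : ∀ n, TbarSummand R τ h x n ≤ TbarSummand R τ h' z n) :
    Tbar d q R τ h x ≤ Tbar d q R τ h' z :=
  ENNReal.rpow_le_rpow (ENNReal.tsum_le_tsum fun n => ENNReal.rpow_le_rpow (hle n) hq)
    (by positivity)

lemma TbarSummand_eq_zero_of_notMem {h : (Fin d → ℝ) → ENNReal} {x : Fin d → ℝ} {n : ℕ}
    (hx : x ∉ cubeOf d (R n)) : TbarSummand R τ h x n = 0 := by
  rw [TbarSummand, indicator_of_notMem hx, mul_zero]

lemma TbarSummand_indicator_compl_eq_zero {h : (Fin d → ℝ) → ENNReal} {G : Set (Fin d → ℝ)}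
    {x : Fin d → ℝ} {n : ℕ} (hG : cubeOf d (R n) ⊆ G) :
    TbarSummand R τ (Gᶜ.indicator h) x n = 0 := by
  have : ∫⁻ y in cubeOf d (R n), Gᶜ.indicator h y = 0 := by
    rw [setLIntegral_congr_fun (measurableSet_cubeOf (R n))
      fun y hy => indicator_of_notMem (notMem_compl_iff.mpr (hG hy)) h, lintegral_zero]
  rw [TbarSummand, this, mul_zero, mul_zero, zero_mul]

lemma TbarSummand_mono {h h' : (Fin d → ℝ) → ENNReal} {x z : Fin d → ℝ} {n : ℕ}
    (hz : z ∈ cubeOf d (R n)) (hh : h ≤ h') : TbarSummand R τ h x n ≤ TbarSummand R τ h' z n := by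
  unfold TbarSummand
  rw [indicator_of_mem hz]
  gcongr
  · exact hh _
  · exact indicator_le_self' (fun _ _ => zero_le) x

end TbarSummand

theorem Tbar_maximum_principle_general {d : ℕ} (q : ℝ) (hq : 1 ≤ q)
    (R : ℕ → ℤ × (Fin d → ℤ)) (τ : ℕ → ENNReal)
    (σ f : (Fin d → ℝ) → ENNReal)
    (k : ℤ) (Q : ℤ × (Fin d → ℤ))
    (hwhitney : ∃ z ∈ grandparentCubeOf d Q,
      Tbar d q R τ (fun y => f y * σ y) z ≤ (2 : ENNReal) ^ (k : ℝ)) :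
    ∀ x ∈ cubeOf d Q,
      Tbar d q R τ ((grandparentCubeOf d Q)ᶜ.indicator (fun y => f y * σ y)) x ≤
        (2 : ENNReal) ^ (k : ℝ) := by
  obtain ⟨z, hzG, hz⟩ := hwhitney
  intro x hxQ
  have hxG : x ∈ grandparentCubeOf d Q :=
    cubeOf_subset_parentCubeOf _ (cubeOf_subset_parentCubeOf _ hxQ)
  refine (Tbar_le_Tbar_of_summand_le (by linarith) fun n => ?_).trans hz
  by_cases hxR : x ∈ cubeOf d (R n)
  · rcases cubeOf_subset_or_subset_of_mem hxR hxG with hRG | hGR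
    · exact (TbarSummand_indicator_compl_eq_zero hRG).trans_le zero_le
    · exact TbarSummand_mono (hGR hzG) (indicator_le_self _ _)
  · exact (TbarSummand_eq_zero_of_notMem hxR).trans_le zero_le

/-- maximum principle: if `Q` is a Whitney cube for
`Ω_k = {T̄(fσ) > 2^k}`, i.e. some point of the grandparent `Q^{(2)}` lies
outside `Ω_k`, then `T̄(1_{(Q^{(2)})ᶜ} fσ) ≤ 2^k` on `Q`. -/
theorem Tbar_maximum_principle {d : ℕ} (q : ℝ) (hq : 1 ≤ q)
    (R : ℕ → ℤ × (Fin d → ℤ)) (τ : ℕ → ENNReal)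
    (σ f : (Fin d → ℝ) → ENNReal) (hσmeas : Measurable σ) (hσpos : ∀ x, 0 < σ x)
    (hfmeas : Measurable f)
    (k : ℤ) (Q : ℤ × (Fin d → ℤ))
    (hwhitney : ∃ z ∈ grandparentCubeOf d Q,
      Tbar d q R τ (fun y => f y * σ y) z ≤ (2 : ENNReal) ^ (k : ℝ)) :
    ∀ x ∈ cubeOf d Q,
      Tbar d q R τ ((grandparentCubeOf d Q)ᶜ.indicator (fun y => f y * σ y)) x ≤
        (2 : ENNReal) ^ (k : ℝ) :=
  Tbar_maximum_principle_general q hq R τ σ f k Q hwhitney
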